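/- arXiv:1205.3575 — 6 statements merged into one kernel-verified Lean document; each statement's English description precedes it below -/
import Mathlib

section
/- Define recursively Δ₀(i) = 1 and Δₙ(i) = C(i,n) − Σ_{k=1}^{n−1} Δₖ(i)·C(i,n−k) for n ≥ 1, where C(i,n) is the binomial coefficient viewed as a polynomial in i. Then for every n ≥ 1, Δₙ is a polynomial in i of degree n whose leading coefficient is (−1)^{n+1}/n!. -/
/-!
Comparing the coefficients of `iⁿ` in the recurrence, and using that `Δₖ · C(i, n - k)` has
degree `n` for `1 ≤ k < n`, the top coefficient `aₙ` of `Δₙ` satisfies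
`aₙ = 1/n! - ∑_{0<k<n} aₖ/(n-k)!`. With `aₖ = (-1)^(k+1)/k!` the sum is
`-(1/n!) ∑_{0<k<n} (-1)^k C(n,k) = (1 + (-1)^n)/n!`, by the vanishing of the alternating sum
of binomial coefficients, which gives `aₙ = (-1)^(n+1)/n!` and in particular `aₙ ≠ 0`.
-/

open Polynomial

/-- The binomial coefficient `C(i, n)` viewed as a polynomial of degree `n`
in the variable `i`:  `X(X-1)⋯(X-n+1)/n!`. -/
noncomputable def binPoly (n : ℕ) : Polynomial ℝ :=
  ((n.factorial : ℝ)⁻¹) • descPochhammer ℝ n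

open Finset
open scoped Nat

theorem sum_Icc_neg_one_pow_succ_mul_choose {n : ℕ} (hn : 1 ≤ n) :
    ∑ k ∈ Icc 1 (n - 1), (-1 : ℤ) ^ (k + 1) * n.choose k = 1 + (-1) ^ n := by
  have h_alt : ∑ k ∈ range (n + 1), (-1 : ℤ) ^ k * n.choose k = 0 := by
    rw [Int.alternating_sum_range_choose, if_neg (by omega)]
  have h_split : range (n + 1) = insert 0 (insert n (Icc 1 (n - 1))) := by
    ext k
    simp only [mem_range, mem_insert, mem_Icc]
    omega
  rw [h_split, sum_insert (by simp; omega), sum_insert (by simp; omega)] at h_alt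
  simp only [pow_zero, Nat.choose_zero_right, Nat.choose_self, Nat.cast_one, mul_one] at h_alt
  simp only [pow_succ, mul_neg_one, neg_mul, sum_neg_distrib]
  linarith

theorem sum_Icc_neg_one_pow_succ_div_factorial_div_factorial {K : Type*} [Field K] [CharZero K]
    {n : ℕ} (hn : 1 ≤ n) :
    ∑ k ∈ Icc 1 (n - 1), (-1 : K) ^ (k + 1) / k ! / (n - k)! = (1 + (-1) ^ n) / n ! := by
  have h_term : ∀ k ∈ Icc 1 (n - 1),
      (-1 : K) ^ (k + 1) / k ! / (n - k)! = (-1) ^ (k + 1) * n.choose k / n ! := by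
    intro k hk
    rw [Nat.cast_choose K (by grind), mul_div_assoc,
      div_div_cancel_left' (Nat.cast_ne_zero.mpr n.factorial_ne_zero), div_div, div_eq_mul_inv]
  rw [sum_congr rfl h_term, ← sum_div]
  exact_mod_cast congrArg (fun z : ℤ => (z : K) / n !) (sum_Icc_neg_one_pow_succ_mul_choose hn)

theorem natDegree_binPoly (n : ℕ) : (binPoly n).natDegree = n := by
  rw [binPoly, natDegree_smul _ (by positivity), descPochhammer_natDegree]

theorem coeff_binPoly_self (n : ℕ) : (binPoly n).coeff n = (n ! : ℝ)⁻¹ := by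
  have h_monic := (monic_descPochhammer ℝ n).coeff_natDegree
  rw [descPochhammer_natDegree] at h_monic
  rw [binPoly, coeff_smul, h_monic, smul_eq_mul, mul_one]

section MulBinPoly

variable {p : ℝ[X]} {k n : ℕ}

theorem natDegree_mul_binPoly_sub_le (hp : p.natDegree ≤ k) (hkn : k ≤ n) :
    (p * binPoly (n - k)).natDegree ≤ n :=
  (natDegree_mul_le_of_le hp (natDegree_binPoly _).le).trans (by omega)

theorem coeff_mul_binPoly_sub (hp : p.natDegree ≤ k) (hkn : k ≤ n) :
    (p * binPoly (n - k)).coeff n = p.coeff k / (n - k)! := by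
  obtain ⟨m, rfl⟩ := Nat.exists_eq_add_of_le hkn
  rw [Nat.add_sub_cancel_left, coeff_mul_add_eq_of_natDegree_le hp (natDegree_binPoly _).le,
    coeff_binPoly_self, div_eq_mul_inv]

end MulBinPoly

theorem natDegree_le_and_coeff_self_of_rec (Δ : ℕ → ℝ[X])
    (hrec : ∀ n, 1 ≤ n → Δ n = binPoly n - ∑ k ∈ Icc 1 (n - 1), Δ k * binPoly (n - k)) :
    ∀ n, 1 ≤ n → (Δ n).natDegree ≤ n ∧ (Δ n).coeff n = (-1) ^ (n + 1) / n ! := by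
  intro n
  induction n using Nat.strong_induction_on with
  | _ n ih =>
  intro hn
  have ih' : ∀ k ∈ Icc 1 (n - 1), (Δ k).natDegree ≤ k ∧ (Δ k).coeff k = (-1) ^ (k + 1) / k ! :=
    fun k hk => ih k (by grind) (mem_Icc.mp hk).1
  have hkn : ∀ k ∈ Icc 1 (n - 1), k ≤ n := fun k hk => by grind
  rw [hrec n hn]
  constructor
  · refine (natDegree_sub_le _ _).trans (max_le (natDegree_binPoly n).le ?_)
    exact natDegree_sum_le_of_forall_le _ _
      fun k hk => natDegree_mul_binPoly_sub_le (ih' k hk).1 (hkn k hk)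
  · have h_top : ∀ k ∈ Icc 1 (n - 1),
        (Δ k * binPoly (n - k)).coeff n = (-1 : ℝ) ^ (k + 1) / k ! / (n - k)! := fun k hk => by
      rw [coeff_mul_binPoly_sub (ih' k hk).1 (hkn k hk), (ih' k hk).2]
    rw [coeff_sub, finsetSum_coeff, coeff_binPoly_self, sum_congr rfl h_top,
      sum_Icc_neg_one_pow_succ_div_factorial_div_factorial hn]
    field_simp
    ring

theorem stmt0_general (Δ : ℕ → Polynomial ℝ)
    (hrec : ∀ n, 1 ≤ n →
      Δ n = binPoly n - ∑ k ∈ Finset.Icc 1 (n - 1), Δ k * binPoly (n - k)) :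
    ∀ n, 1 ≤ n →
      (Δ n).natDegree = n ∧ (Δ n).leadingCoeff = (-1) ^ (n + 1) / n.factorial := by
  intro n hn
  obtain ⟨hle, hcoeff⟩ := natDegree_le_and_coeff_self_of_rec Δ hrec n hn
  have hdeg : (Δ n).natDegree = n :=
    natDegree_eq_of_le_of_coeff_ne_zero hle (by rw [hcoeff]; positivity)
  exact ⟨hdeg, by rw [leadingCoeff, hdeg, hcoeff]⟩

theorem stmt0 (Δ : ℕ → Polynomial ℝ)
    (h0 : Δ 0 = 1)
    (hrec : ∀ n, 1 ≤ n →
      Δ n = binPoly n - ∑ k ∈ Finset.Icc 1 (n - 1), Δ k * binPoly (n - k)) :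
    ∀ n, 1 ≤ n →
      (Δ n).natDegree = n ∧ (Δ n).leadingCoeff = (-1) ^ (n + 1) / n.factorial :=
  stmt0_general Δ hrec
end

section
/- Let θ ∈ ℝ and let T be the operator on ℝ⁴ given in 2×2 block form by T = [[R_θ, R_θ],[0, R_θ]], where R_θ is the rotation matrix of angle θ. Then T is not 2-supercyclic: there is no 2-dimensional subspace M of ℝ⁴ such that ⋃_{k∈ℕ} T^k(M) is dense in ℝ⁴. -/
open Matrix

/-- The 2×2 rotation matrix of angle `θ`. -/
noncomputable def rotM (θ : ℝ) : Matrix (Fin 2) (Fin 2) ℝ :=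
  !![Real.cos θ, -Real.sin θ; Real.sin θ, Real.cos θ]

/-- A linear operator `T` on `ι → ℝ` is `n`-supercyclic if there is an `n`-dimensional
subspace `E` whose orbit `⋃ k, T^k(E)` is dense. -/
def NSupercyclic {ι : Type*} [Fintype ι] (n : ℕ) (T : (ι → ℝ) →ₗ[ℝ] (ι → ℝ)) : Prop :=
  ∃ E : Submodule ℝ (ι → ℝ), Module.finrank ℝ E = n ∧
    Dense (⋃ k : ℕ, ⇑(T ^ k) '' (E : Set (ι → ℝ)))

/-!
Identify `ℝ⁴` with `ℂ²` so that `T (z, w) = e^{iθ} (z + w, w)`; then `T^k (z, w) =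
e^{ikθ} (z + k w, w)`, so taking the slope `z / w` turns the orbit of a point into the translates
`z / w + k`. The slopes of the points of a real plane `E ⊆ ℂ²` satisfy
`Im ((z₁ - ζ w₁) * conj (z₂ - ζ w₂)) = 0` for a basis `(z₁, w₁), (z₂, w₂)` of `E`, a nontrivial
equation `A |ζ|² + Im (ζ D) + C = 0` describing a circle or a line. A dense orbit of `E` would make
the translates of this curve by `ℕ` dense in `ℂ`; but the translates of a circle stay in a
horizontal strip, and those of a line stay in a half-plane.
-/

open Complex ComplexConjugate Set

lemma not_dense_of_subset_isClosed {X : Type*} [TopologicalSpace X] {s F : Set X}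
    (hF : IsClosed F) (hsF : s ⊆ F) {x : X} (hx : x ∉ F) : ¬ Dense s :=
  fun hs => hx (hF.closure_subset_iff.2 hsF (hs.closure_eq ▸ mem_univ x))

lemma im_mul_conj_eq_zero_of_add_eq_zero {a b : ℂ} {s t : ℝ} (hst : ¬ (s = 0 ∧ t = 0))
    (h : s * a + t * b = 0) : (a * conj b).im = 0 := by
  have hre := congrArg re h
  have him := congrArg im h
  simp only [add_re, add_im, re_ofReal_mul, im_ofReal_mul, zero_re, zero_im] at hre him
  have hs : s * (a * conj b).im = 0 := by
    simp only [mul_im, conj_re, conj_im]; linear_combination b.re * him - b.im * hre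
  have ht : t * (a * conj b).im = 0 := by
    simp only [mul_im, conj_re, conj_im]; linear_combination a.im * hre - a.re * him
  by_contra hne
  exact hst ⟨(mul_eq_zero.1 hs).resolve_right hne, (mul_eq_zero.1 ht).resolve_right hne⟩

lemma exists_ofReal_mul_of_im_mul_conj_eq_zero {a b : ℂ} (ha : a ≠ 0)
    (h : (a * conj b).im = 0) : ∃ r : ℝ, b = r * a := by
  refine ⟨(b / a).re, ?_⟩
  have him : (b / a).im = 0 := by
    simp only [div_im, mul_im, conj_re, conj_im] at h ⊢
    rw [← sub_div, div_eq_zero_iff]; left; linarith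
  calc b = b / a * a := (div_mul_cancel₀ b ha).symm
    _ = _ := by congr 1; exact ext (by simp) (by simpa using him)

lemma ofReal_mul_I_div_mul_im {D : ℂ} (hD : D ≠ 0) (t : ℝ) : ((t * I / D) * D).im = t := by
  simp [div_mul_cancel₀ _ hD]

lemma Submodule.exists_linearIndependent_pair_of_finrank_eq_two {K V : Type*} [DivisionRing K]
    [AddCommGroup V] [Module K V] {E : Submodule K V} (hE : Module.finrank K E = 2) :
    ∃ u v : V, LinearIndependent K ![u, v] ∧ ∀ x ∈ E, ∃ s t : K, x = s • u + t • v := by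
  have : Module.Finite K E := Module.finite_of_finrank_eq_succ hE
  let b := Module.finBasisOfFinrankEq K E hE
  refine ⟨b 0, b 1, ?_, fun x hx => ⟨b.repr ⟨x, hx⟩ 0, b.repr ⟨x, hx⟩ 1, ?_⟩⟩
  · have hli := b.linearIndependent.map' E.subtype E.ker_subtype
    rwa [show E.subtype ∘ b = ![(b 0 : V), b 1] by funext i; fin_cases i <;> rfl] at hli
  · have hx' := congrArg Subtype.val (b.sum_repr ⟨x, hx⟩)
    rw [Fin.sum_univ_two, Submodule.coe_add, Submodule.coe_smul, Submodule.coe_smul] at hx'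
    exact hx'.symm

lemma dense_image_div_of_dense {S : Set (ℂ × ℂ)} (hS : Dense S) :
    Dense ((fun x => x.1 / x.2) '' (S ∩ {x | x.2 ≠ 0})) := by
  refine dense_iff_inter_open.2 fun U hU ⟨ξ, hξ⟩ => ?_
  have hopen : IsOpen ({x : ℂ × ℂ | x.2 ≠ 0} ∩ (fun x => x.1 / x.2) ⁻¹' U) :=
    ContinuousOn.isOpen_inter_preimage
      (continuous_fst.continuousOn.div continuous_snd.continuousOn fun _ hx => hx)
      (isOpen_ne_fun continuous_snd continuous_const) hU
  obtain ⟨x, ⟨hx, hxU⟩, hxS⟩ := hS.inter_open_nonempty _ hopen ⟨(ξ, 1), by simpa using hξ⟩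
  exact ⟨_, hxU, x, ⟨hxS, hx⟩, rfl⟩

/-- A circle when `A ≠ 0`, a line when `A = 0 ≠ D`, empty when `A = D = 0 ≠ C`. -/
def genCircle (A : ℝ) (D : ℂ) (C : ℝ) : Set ℂ := {ζ | A * normSq ζ + (ζ * D).im + C = 0}

lemma norm_le_of_mem_genCircle {A C : ℝ} {D ζ : ℂ} (hA : A ≠ 0) (hζ : ζ ∈ genCircle A D C) :
    ‖ζ‖ ≤ max 1 ((‖D‖ + |C|) / |A|) := by
  have hquad : |A| * ‖ζ‖ ^ 2 ≤ ‖D‖ * ‖ζ‖ + |C| := calc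
    |A| * ‖ζ‖ ^ 2 = |(ζ * D).im + C| := by
      rw [Complex.sq_norm, ← abs_of_nonneg (normSq_nonneg ζ), ← abs_mul,
        show A * normSq ζ = -((ζ * D).im + C) by linarith [hζ.out], abs_neg]
    _ ≤ |(ζ * D).im| + |C| := abs_add_le _ _
    _ ≤ ‖D‖ * ‖ζ‖ + |C| := by
      gcongr; exact (abs_im_le_norm _).trans (by rw [norm_mul, mul_comm])
  by_contra! hlt
  have h1 : 1 < ‖ζ‖ := (le_max_left _ _).trans_lt hlt
  have h2 : ‖D‖ + |C| < |A| * ‖ζ‖ :=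
    (div_lt_iff₀' (abs_pos.2 hA)).1 ((le_max_right _ _).trans_lt hlt)
  nlinarith [abs_nonneg C]

lemma genCircle_neg (A : ℝ) (D : ℂ) (C : ℝ) : genCircle (-A) (-D) (-C) = genCircle A D C := by
  ext ζ
  simp only [genCircle, mem_ofPred_eq, mul_neg, neg_im]
  constructor <;> intro h <;> linarith

lemma not_dense_iUnion_add_natCast_genCircle_of_ne_zero {C : ℝ} {D : ℂ} (hD : D ≠ 0) :
    ¬ Dense (⋃ k : ℕ, (· + (k : ℂ)) '' genCircle 0 D C) := by
  wlog hDim : 0 ≤ D.im generalizing D C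
  · rw [← genCircle_neg, neg_zero]
    exact this (neg_ne_zero.2 hD) (by rw [neg_im]; linarith)
  refine not_dense_of_subset_isClosed (F := {ξ | -C ≤ (ξ * D).im})
    (isClosed_le continuous_const (by fun_prop))
    (iUnion_subset fun k => image_subset_iff.2 fun ζ hζ => ?_)
    (x := ((-C - 1 : ℝ) : ℂ) * I / D) (by rw [mem_ofPred_eq, ofReal_mul_I_div_mul_im hD]; linarith)
  have hζD : (ζ * D).im = -C := by linarith [hζ.out]
  have hk : ((ζ + k) * D).im = -C + k * D.im := by simp [add_mul, hζD]
  rw [mem_preimage, mem_ofPred_eq, hk]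
  nlinarith [k.cast_nonneg (α := ℝ)]

lemma not_dense_iUnion_add_natCast_genCircle {A C : ℝ} {D : ℂ}
    (h : ¬ (A = 0 ∧ D = 0 ∧ C = 0)) :
    ¬ Dense (⋃ k : ℕ, (· + (k : ℂ)) '' genCircle A D C) := by
  by_cases hA : A = 0
  · subst hA
    by_cases hD : D = 0
    · subst hD
      have hC : C ≠ 0 := fun hC => h ⟨rfl, rfl, hC⟩
      refine not_dense_of_subset_isClosed isClosed_empty
        (iUnion_subset fun k => image_subset_iff.2 fun ζ hζ => hC ?_) (notMem_empty 0)
      simpa [genCircle] using hζ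
    · exact not_dense_iUnion_add_natCast_genCircle_of_ne_zero hD
  · set M := max 1 ((‖D‖ + |C|) / |A|)
    have hM : 1 ≤ M := le_max_left _ _
    refine not_dense_of_subset_isClosed (F := {ξ | |ξ.im| ≤ M})
      (isClosed_le (by fun_prop) continuous_const)
      (iUnion_subset fun k => image_subset_iff.2 fun ζ hζ => ?_) (x := (M + 1 : ℝ) * I)
      (by simp [abs_of_pos (by linarith : (0 : ℝ) < M + 1)])
    simp only [mem_preimage, mem_ofPred_eq, add_im, natCast_im, add_zero]
    exact (abs_im_le_norm ζ).trans (norm_le_of_mem_genCircle hA hζ)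

/-- The expansion of `Im ((u.1 - ζ u.2) * conj (v.1 - ζ v.2)) = 0`, which holds when `ζ` is the
slope `z / w` of a point `(z, w)` of the real plane spanned by `u` and `v`. -/
def pencilCircle (u v : ℂ × ℂ) : Set ℂ :=
  genCircle (u.2 * conj v.2).im (v.2 * conj u.1 - u.2 * conj v.1) (u.1 * conj v.1).im

lemma div_mem_pencilCircle {u v : ℂ × ℂ} {s t : ℝ} (hw : (s • u + t • v).2 ≠ 0) :
    (s • u + t • v).1 / (s • u + t • v).2 ∈ pencilCircle u v := by
  set ζ := (s • u + t • v).1 / (s • u + t • v).2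
  have hst : ¬ (s = 0 ∧ t = 0) := by
    rintro ⟨rfl, rfl⟩; simp at hw
  have hlin : s * (u.1 - ζ * u.2) + t * (v.1 - ζ * v.2) = 0 := by
    have hζ : ζ * (s • u + t • v).2 = (s • u + t • v).1 := div_mul_cancel₀ _ hw
    simp only [Prod.fst_add, Prod.snd_add, Prod.smul_fst, Prod.smul_snd, real_smul] at hζ
    linear_combination -hζ
  have key := im_mul_conj_eq_zero_of_add_eq_zero hst hlin
  simp only [pencilCircle, genCircle, mem_ofPred_eq, ← key]
  simp only [map_sub, map_mul, mul_im, mul_re, sub_im, sub_re, conj_re, conj_im, normSq_apply]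
  ring

lemma pencilCircle_coeffs_ne_zero {u v : ℂ × ℂ} (hli : LinearIndependent ℝ ![u, v]) :
    ¬ ((u.2 * conj v.2).im = 0 ∧ v.2 * conj u.1 - u.2 * conj v.1 = 0 ∧
      (u.1 * conj v.1).im = 0) := by
  rintro ⟨hA, hD, hC⟩
  rw [LinearIndependent.pair_iff] at hli
  suffices u = 0 ∨ ∃ r : ℝ, v = r • u by
    rcases this with rfl | ⟨r, rfl⟩
    · exact one_ne_zero (hli 1 0 (by simp)).1
    · exact one_ne_zero (neg_eq_zero.1 (hli r (-1) (by simp)).2)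
  obtain ⟨z₁, w₁⟩ := u
  obtain ⟨z₂, w₂⟩ := v
  dsimp only at hA hD hC
  by_cases hw₁ : w₁ = 0
  · by_cases hz₁ : z₁ = 0
    · simp [hz₁, hw₁]
    have hw₂ : w₂ = 0 := by
      simpa [hw₁, hz₁] using hD
    obtain ⟨r, hr⟩ := exists_ofReal_mul_of_im_mul_conj_eq_zero hz₁ hC
    exact Or.inr ⟨r, by simp [hr, hw₁, hw₂]⟩
  · obtain ⟨r, hr⟩ := exists_ofReal_mul_of_im_mul_conj_eq_zero hw₁ hA
    have hz : conj z₂ = r * conj z₁ := by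
      apply mul_left_cancel₀ hw₁
      linear_combination -hD + conj z₁ * hr
    refine Or.inr ⟨r, ?_⟩
    simp only [Prod.smul_mk, real_smul, hr, Prod.mk.injEq, and_true]
    simpa using congrArg conj hz

lemma exists_genCircle_of_finrank_eq_two {E : Submodule ℝ (ℂ × ℂ)}
    (hE : Module.finrank ℝ E = 2) :
    ∃ A D C, ¬ (A = 0 ∧ D = 0 ∧ C = 0) ∧ ∀ x ∈ E, x.2 ≠ 0 → x.1 / x.2 ∈ genCircle A D C := by
  obtain ⟨u, v, hli, hspan⟩ := Submodule.exists_linearIndependent_pair_of_finrank_eq_two hE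
  refine ⟨_, _, _, pencilCircle_coeffs_ne_zero hli, fun x hx hw => ?_⟩
  obtain ⟨s, t, rfl⟩ := hspan x hx
  exact div_mem_pencilCircle hw

/-- In these coordinates `R_θ` acts on each factor as multiplication by `exp (θ i)`. -/
noncomputable def complexCoords : (Fin 2 ⊕ Fin 2 → ℝ) ≃L[ℝ] ℂ × ℂ :=
  LinearEquiv.toContinuousLinearEquiv
    { toFun := fun p => (⟨p (.inl 0), p (.inl 1)⟩, ⟨p (.inr 0), p (.inr 1)⟩)
      invFun := fun x => Sum.elim ![x.1.re, x.1.im] ![x.2.re, x.2.im]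
      map_add' := fun p q => rfl
      map_smul' := fun r p => by simp [Prod.ext_iff, Complex.ext_iff]
      left_inv := fun p => by
        funext i; rcases i with i | i <;> fin_cases i <;> rfl
      right_inv := fun x => rfl }

lemma complexCoords_apply (p : Fin 2 ⊕ Fin 2 → ℝ) :
    complexCoords p = (⟨p (.inl 0), p (.inl 1)⟩, ⟨p (.inr 0), p (.inr 1)⟩) := rfl

lemma complexCoords_mulVecLin (θ : ℝ) (p : Fin 2 ⊕ Fin 2 → ℝ) :
    complexCoords ((fromBlocks (rotM θ) (rotM θ) 0 (rotM θ)).mulVecLin p) =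
      (exp (θ * I) * ((complexCoords p).1 + (complexCoords p).2),
        exp (θ * I) * (complexCoords p).2) := by
  simp only [Prod.ext_iff, Complex.ext_iff, complexCoords_apply]
  simp only [rotM, mulVecLin_apply, mulVec, dotProduct, Fintype.sum_sum_type, Fin.sum_univ_two,
    fromBlocks_apply₁₁, fromBlocks_apply₁₂, fromBlocks_apply₂₁, fromBlocks_apply₂₂, of_apply,
    cons_val', cons_val_fin_one, cons_val_zero, cons_val_one, Matrix.zero_apply, zero_mul,
    Finset.sum_const_zero, zero_add, neg_mul, add_re, add_im, mul_re, mul_im,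
    exp_ofReal_mul_I_re, exp_ofReal_mul_I_im]
  exact ⟨⟨by ring, by ring⟩, by ring, by ring⟩

lemma complexCoords_pow_apply (θ : ℝ) (k : ℕ) (p : Fin 2 ⊕ Fin 2 → ℝ) :
    complexCoords (((fromBlocks (rotM θ) (rotM θ) 0 (rotM θ)).mulVecLin ^ k) p) =
      (exp (θ * I) ^ k * ((complexCoords p).1 + k * (complexCoords p).2),
        exp (θ * I) ^ k * (complexCoords p).2) := by
  induction k with
  | zero => simp
  | succ k ih =>
    rw [pow_succ', Module.End.mul_apply, complexCoords_mulVecLin, ih]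
    simp only [Prod.mk.injEq]
    constructor <;> push_cast <;> ring

theorem stmt5 (θ : ℝ) :
    ¬ NSupercyclic 2 (Matrix.fromBlocks (rotM θ) (rotM θ) 0 (rotM θ)).mulVecLin := by
  rintro ⟨E, hE, hdense⟩
  have hE' : Module.finrank ℝ (E.map (complexCoords.toLinearEquiv : _ →ₗ[ℝ] ℂ × ℂ)) = 2 := by
    rwa [LinearEquiv.finrank_map_eq]
  obtain ⟨A, D, C, hne, hcircle⟩ := exists_genCircle_of_finrank_eq_two hE'
  refine not_dense_iUnion_add_natCast_genCircle hne ((dense_image_div_of_dense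
    (complexCoords.toHomeomorph.isDenseEmbedding.dense_image.2 hdense)).mono ?_)
  rintro _ ⟨_, ⟨⟨x, hx, rfl⟩, hw⟩, rfl⟩
  obtain ⟨k, p, hp, rfl⟩ := mem_iUnion.1 hx
  rw [mem_ofPred_eq, ContinuousLinearEquiv.coe_toHomeomorph, complexCoords_pow_apply] at hw
  rw [ContinuousLinearEquiv.coe_toHomeomorph, complexCoords_pow_apply]
  have hw' : (complexCoords p).2 ≠ 0 := right_ne_zero_of_mul hw
  refine mem_iUnion.2 ⟨k, _, hcircle _ ⟨p, hp, rfl⟩ hw', ?_⟩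
  change (complexCoords p).1 / (complexCoords p).2 + k = _
  field_simp
end

section
/- Let N ≥ 2 and let R_N be the operator on ℝ^{2N} given by the block-diagonal matrix diag(a₁R_{θ₁},…,a_N R_{θ_N}) for arbitrary real numbers a₁,…,a_N and angles θ₁,…,θ_N. Then R_N is not (N−1)-supercyclic. -/
open Matrix

/-!
Identify `ℝ^{2N}` with `ℂ^N`: the operator becomes coordinatewise multiplication by
`μ i = a i * exp (θ i * I) = ‖μ i‖ * u i` with `‖u i‖ = 1`, so every orbit point `μ ^ k * z`,
`z ∈ E`, lies in the torus orbit `𝕋^N • D ^ k E` of the rescaling `D ^ k z = (‖μ i‖ ^ k • z i)ᵢ`.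
A limit of `D ^ (k j) (x j)` with `x j ∈ E` and `k j → ∞` is controlled level by level (a level is
a value of `‖μ i‖`) by vectors of `E` vanishing on the higher levels, and these level pieces span
a subspace of dimension at most `dim E`. So the closure of the orbit is covered by countably many
sets `𝕋^N • W` with `dim W ≤ N - 1`. Each is closed since `𝕋^N` is compact, and has empty
interior as the `C¹` image of a space of dimension `N + dim W < 2N`; Baire's theorem forbids them
to cover `ℂ^N`.
-/

open Filter Topology Set Module Pointwise

lemma Submodule.finrank_map_add_finrank_inf_ker {K V W : Type*} [DivisionRing K] [AddCommGroup V]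
    [Module K V] [AddCommGroup W] [Module K W] (f : V →ₗ[K] W) (U : Submodule K V)
    [FiniteDimensional K U] :
    finrank K (U.map f) + finrank K ↥(U ⊓ LinearMap.ker f) = finrank K U := by
  have h := (f.domRestrict U).finrank_range_add_finrank_ker
  rwa [LinearMap.range_domRestrict, LinearMap.ker_domRestrict,
    ← Submodule.finrank_map_subtype_eq, Submodule.map_comap_subtype] at h

lemma closure_iUnion_subset_union_of_tendsto {X : Type*} [TopologicalSpace X]
    [FrechetUrysohnSpace X] {A : ℕ → Set X} (hA : ∀ k, IsClosed (A k)) {L : Set X}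
    (hL : ∀ (k : ℕ → ℕ) (u : ℕ → X) (y : X), Tendsto k atTop atTop → (∀ j, u j ∈ A (k j)) →
      Tendsto u atTop (𝓝 y) → y ∈ L) :
    closure (⋃ k, A k) ⊆ (⋃ k, A k) ∪ L := by
  intro y hy
  obtain ⟨u, hu, hlim⟩ := mem_closure_iff_seq_limit.1 hy
  choose k hk using fun j => mem_iUnion.1 (hu j)
  by_cases hrep : ∃ m, ∃ᶠ j in atTop, k j = m
  · obtain ⟨m, hm⟩ := hrep
    refine Or.inl (mem_iUnion.2 ⟨m, (hA m).mem_of_frequently_of_tendsto ?_ hlim⟩)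
    exact hm.mono fun j hj => hj ▸ hk j
  · push Not at hrep
    refine Or.inr (hL k u y (tendsto_atTop.2 fun M => ?_) hk hlim)
    filter_upwards [(Filter.eventually_all_finset (Finset.range M)).2 fun m _ => hrep m]
      with j hj
    by_contra! hlt
    exact hj (k j) (Finset.mem_range.2 hlt) rfl

section CoordinateLevels

variable {ι F : Type*} [NormedAddCommGroup F] [NormedSpace ℝ F]

def coordScale (d : ι → ℝ) : (ι → F) →ₗ[ℝ] (ι → F) :=
  LinearMap.pi fun i => d i • LinearMap.proj i

@[simp]
lemma coordScale_apply (d : ι → ℝ) (x : ι → F) (i : ι) : coordScale d x i = d i • x i := rfl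

open Classical in
noncomputable def coordProj (s : Set ι) : (ι → F) →ₗ[ℝ] (ι → F) :=
  LinearMap.pi fun i => if i ∈ s then LinearMap.proj i else 0

lemma coordProj_apply_of_mem {s : Set ι} {i : ι} (hi : i ∈ s) (x : ι → F) :
    coordProj s x i = x i := by
  simp [coordProj, hi]

lemma coordProj_apply_of_notMem {s : Set ι} {i : ι} (hi : i ∉ s) (x : ι → F) :
    coordProj s x i = 0 := by
  simp [coordProj, hi]

lemma coordProj_coordProj_of_subset {s t : Set ι} (hst : s ⊆ t) (x : ι → F) :
    coordProj s (coordProj t x) = coordProj s x := by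
  funext i
  by_cases hi : i ∈ s
  · rw [coordProj_apply_of_mem hi, coordProj_apply_of_mem hi, coordProj_apply_of_mem (hst hi)]
  · rw [coordProj_apply_of_notMem hi, coordProj_apply_of_notMem hi]

lemma sum_coordProj_fiber [Fintype ι] (d : ι → ℝ) (x : ι → F) :
    ∑ c ∈ Finset.univ.image d, coordProj {i | d i = c} x = x := by
  funext i
  rw [Finset.sum_apply,
    Finset.sum_eq_single_of_mem (d i) (Finset.mem_image_of_mem d (Finset.mem_univ i))]
  · exact coordProj_apply_of_mem (s := {i | d i = d i}) rfl x
  · intro c _ hc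
    exact coordProj_apply_of_notMem (s := {i | d i = c}) (Ne.symm hc) x

lemma ker_coordProj (s : Set ι) :
    LinearMap.ker (coordProj s : (ι → F) →ₗ[ℝ] (ι → F)) = Submodule.pi s ⊥ := by
  ext x
  simp only [LinearMap.mem_ker, Submodule.mem_pi, Pi.bot_apply, Submodule.mem_bot]
  refine ⟨fun hx i hi => by rw [← coordProj_apply_of_mem hi x, hx, Pi.zero_apply], fun hx => ?_⟩
  funext i
  by_cases hi : i ∈ s
  · rw [coordProj_apply_of_mem hi, hx i hi, Pi.zero_apply]
  · rw [coordProj_apply_of_notMem hi, Pi.zero_apply]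

/-- The possible limits, at level `c`, of rescaled vectors `d ^ k • x` with `x ∈ E` and `k → ∞`. -/
noncomputable def leadingSubspace (d : ι → ℝ) (E : Submodule ℝ (ι → F)) (c : ℝ) :
    Submodule ℝ (ι → F) :=
  (E ⊓ Submodule.pi {i | c < d i} ⊥).map (coordProj {i | d i = c})

noncomputable def limitSubspace [Fintype ι] (d : ι → ℝ) (E : Submodule ℝ (ι → F)) :
    Submodule ℝ (ι → F) :=
  (Finset.univ.image d).sup (leadingSubspace d E)

lemma finrank_finsetSup_leadingSubspace_le [Fintype ι] [FiniteDimensional ℝ F] (d : ι → ℝ)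
    (S : Finset ℝ) (W : Submodule ℝ (ι → F)) :
    finrank ℝ ↥(S.sup (leadingSubspace d W)) ≤ finrank ℝ W := by
  induction S using Finset.induction_on_max generalizing W with
  | empty => rw [Finset.sup_empty, finrank_bot]; exact Nat.zero_le _
  | insert c₀ S hlt ih =>
    set W' := W ⊓ Submodule.pi {i | c₀ ≤ d i} ⊥
    have hker :
        W ⊓ Submodule.pi {i | c₀ < d i} ⊥ ⊓ LinearMap.ker (coordProj {i | d i = c₀}) = W' := by
      ext x
      simp only [W', ker_coordProj, Submodule.mem_inf, Submodule.mem_pi, Pi.bot_apply,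
        Submodule.mem_bot, mem_ofPred_eq, le_iff_lt_or_eq]
      grind
    have hS : S.sup (leadingSubspace d W) = S.sup (leadingSubspace d W') := by
      refine Finset.sup_congr rfl fun c hc => ?_
      simp only [leadingSubspace, W']
      congr 1
      ext x
      simp only [Submodule.mem_inf, Submodule.mem_pi, Pi.bot_apply, Submodule.mem_bot,
        mem_ofPred_eq]
      have := hlt c hc
      grind
    rw [Finset.sup_insert, hS]
    calc finrank ℝ ↥(leadingSubspace d W c₀ ⊔ S.sup (leadingSubspace d W'))
        ≤ finrank ℝ (leadingSubspace d W c₀) + finrank ℝ ↥(S.sup (leadingSubspace d W')) :=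
          Submodule.finrank_add_le_finrank_add_finrank _ _
      _ ≤ finrank ℝ (leadingSubspace d W c₀) + finrank ℝ W' := by gcongr; exact ih W'
      _ = finrank ℝ ↥(W ⊓ Submodule.pi {i | c₀ < d i} ⊥) := by
          rw [← hker]; exact Submodule.finrank_map_add_finrank_inf_ker _ _
      _ ≤ finrank ℝ W := Submodule.finrank_mono inf_le_left

lemma finrank_limitSubspace_le [Fintype ι] [FiniteDimensional ℝ F] (d : ι → ℝ)
    (E : Submodule ℝ (ι → F)) : finrank ℝ (limitSubspace d E) ≤ finrank ℝ E :=
  finrank_finsetSup_leadingSubspace_le d _ E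

lemma coordProj_mem_leadingSubspace_of_tendsto [Fintype ι] [FiniteDimensional ℝ F]
    {d : ι → ℝ} {E : Submodule ℝ (ι → F)} {c : ℝ} (hc : 0 ≤ c) {k : ℕ → ℕ}
    (hk : Tendsto k atTop atTop) {x : ℕ → ι → F} (hx : ∀ j, x j ∈ E) {z : ι → F}
    (hz : Tendsto (fun j => coordScale (d ^ k j) (x j)) atTop (𝓝 z)) :
    coordProj {i | d i = c} z ∈ leadingSubspace d E c := by
  have hlim : Tendsto (fun j => c ^ k j • coordProj {i | c ≤ d i} (x j)) atTop
      (𝓝 (coordProj {i | d i = c} z)) := by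
    refine tendsto_pi_nhds.2 fun i => ?_
    have hzi : Tendsto (fun j => d i ^ k j • x j i) atTop (𝓝 (z i)) := by
      simpa using tendsto_pi_nhds.1 hz i
    rcases lt_trichotomy (d i) c with hlt | heq | hgt
    · simp [coordProj_apply_of_notMem (s := {i | c ≤ d i}) (not_le.2 hlt),
        coordProj_apply_of_notMem (s := {i | d i = c}) hlt.ne]
    · simpa [coordProj_apply_of_mem (s := {i | c ≤ d i}) heq.ge,
        coordProj_apply_of_mem (s := {i | d i = c}) heq, heq] using hzi
    · have hdi : 0 < d i := hc.trans_lt hgt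
      have hratio : Tendsto (fun j => (c / d i) ^ k j) atTop (𝓝 0) :=
        (tendsto_pow_atTop_nhds_zero_of_lt_one (div_nonneg hc hdi.le)
          ((div_lt_one hdi).2 hgt)).comp hk
      have := hratio.smul hzi
      rw [zero_smul] at this
      rw [coordProj_apply_of_notMem (s := {i | d i = c}) hgt.ne']
      refine this.congr fun j => ?_
      simp only [Pi.smul_apply, coordProj_apply_of_mem (s := {i | c ≤ d i}) hgt.le, smul_smul,
        ← mul_pow, div_mul_cancel₀ c hdi.ne']
  have hclosed : IsClosed (E.map (coordProj {i | c ≤ d i}) : Set (ι → F)) :=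
    Submodule.closed_of_finiteDimensional _
  obtain ⟨y, hyE, hy⟩ := hclosed.mem_of_tendsto hlim
    (Eventually.of_forall fun j => Submodule.smul_mem _ _ (Submodule.mem_map_of_mem (hx j)))
  refine ⟨y, ⟨hyE, Submodule.mem_pi.2 fun i hi => ?_⟩, ?_⟩
  · have hyi := congrFun hy i
    have hi : c < d i := hi
    rwa [coordProj_apply_of_mem (s := {i | c ≤ d i}) hi.le,
      coordProj_apply_of_notMem (s := {i | d i = c}) hi.ne'] at hyi
  · rw [← coordProj_coordProj_of_subset (s := {i | d i = c}) (t := {i | c ≤ d i})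
      fun i (hi : d i = c) => hi.ge, hy,
      coordProj_coordProj_of_subset subset_rfl]

lemma mem_limitSubspace_of_tendsto [Fintype ι] [FiniteDimensional ℝ F] {d : ι → ℝ} (hd : 0 ≤ d)
    {E : Submodule ℝ (ι → F)} {k : ℕ → ℕ} (hk : Tendsto k atTop atTop) {x : ℕ → ι → F}
    (hx : ∀ j, x j ∈ E) {z : ι → F}
    (hz : Tendsto (fun j => coordScale (d ^ k j) (x j)) atTop (𝓝 z)) :
    z ∈ limitSubspace d E := by
  rw [← sum_coordProj_fiber d z]
  refine Submodule.sum_mem _ fun c hc => Finset.le_sup (f := leadingSubspace d E) hc ?_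
  obtain ⟨i, -, rfl⟩ := Finset.mem_image.1 hc
  exact coordProj_mem_leadingSubspace_of_tendsto (hd i) hk hx hz

lemma closure_iUnion_map_coordScale_subset [Fintype ι] [FiniteDimensional ℝ F] {d : ι → ℝ}
    (hd : 0 ≤ d) (E : Submodule ℝ (ι → F)) :
    closure (⋃ k : ℕ, (E.map (coordScale (d ^ k)) : Set (ι → F))) ⊆
      (⋃ k : ℕ, (E.map (coordScale (d ^ k)) : Set (ι → F))) ∪ limitSubspace d E :=
  closure_iUnion_subset_union_of_tendsto (fun _ => Submodule.closed_of_finiteDimensional _)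
    fun k u y hk hu hy => by
      choose x hx hxu using hu
      exact mem_limitSubspace_of_tendsto hd hk hx (by simpa only [hxu] using hy)

end CoordinateLevels

section TorusSaturation

variable {ι : Type*} [Fintype ι]

lemma interior_univ_smul_submodule_eq_empty (W : Submodule ℝ (ι → ℂ))
    (hW : finrank ℝ W < Fintype.card ι) :
    interior ((univ : Set (ι → Circle)) • (W : Set (ι → ℂ))) = ∅ := by
  let Ψ : (ι → ℝ) × W → ι → ℂ := fun p i => Complex.exp (p.1 i * Complex.I) * (p.2 : ι → ℂ) i
  have hΨ : ContDiff ℝ 1 Ψ := contDiff_pi.2 fun i => by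
    have hangle : ContDiff ℝ 1 fun p : (ι → ℝ) × W => (p.1 i : ℂ) :=
      Complex.ofRealCLM.contDiff.comp (by fun_prop)
    have hcoord : ContDiff ℝ 1 fun p : (ι → ℝ) × W => (p.2 : ι → ℂ) i :=
      (ContinuousLinearMap.proj (R := ℝ) (φ := fun _ : ι => ℂ) i ∘L W.subtypeL ∘L
        ContinuousLinearMap.snd ℝ (ι → ℝ) W).contDiff
    exact (Complex.contDiff_exp.comp (hangle.mul contDiff_const)).mul hcoord
  have hdim : finrank ℝ ((ι → ℝ) × W) < finrank ℝ (ι → ℂ) := by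
    rw [Module.finrank_prod, Module.finrank_fintype_fun_eq_card, Module.finrank_pi_fintype,
      Complex.finrank_real_complex, Finset.sum_const, Finset.card_univ, smul_eq_mul]
    omega
  have hcover : (univ : Set (ι → Circle)) • (W : Set (ι → ℂ)) ⊆ range Ψ := by
    rintro _ ⟨w, -, v, hv, rfl⟩
    refine ⟨(fun i => Complex.arg (w i), ⟨v, hv⟩), funext fun i => ?_⟩
    simp [Ψ, Circle.smul_def, ← Circle.coe_exp]
  exact interior_eq_empty_iff_dense_compl.2
    ((hΨ.dense_compl_range_of_finrank_lt_finrank hdim).mono (compl_subset_compl.2 hcover))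

lemma iUnion_univ_smul_submodule_ne_univ {κ : Type*} [Countable κ]
    (W : κ → Submodule ℝ (ι → ℂ)) (hW : ∀ j, finrank ℝ (W j) < Fintype.card ι) :
    ⋃ j, (univ : Set (ι → Circle)) • (W j : Set (ι → ℂ)) ≠ univ := by
  intro hcover
  obtain ⟨j, hj⟩ := nonempty_interior_of_iUnion_of_closed
    (fun j => (Submodule.closed_of_finiteDimensional (W j)).smul_left_of_isCompact isCompact_univ)
    hcover
  rw [interior_univ_smul_submodule_eq_empty (W j) (hW j)] at hj
  exact not_nonempty_empty hj

end TorusSaturation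

lemma pow_mul_eq_smul_coordScale_norm {ι : Type*} (μ : ι → ℂ) (k : ℕ) (z : ι → ℂ) :
    μ ^ k * z = (fun i => Circle.exp (Complex.arg (μ i))) ^ k •
      coordScale ((fun i => ‖μ i‖) ^ k) z := by
  funext i
  simp only [Pi.mul_apply, Pi.pow_apply, Pi.smul_apply', Circle.smul_def, coordScale_apply,
    Circle.coe_pow, Circle.coe_exp, Complex.real_smul, smul_eq_mul]
  conv_lhs => rw [← Complex.norm_mul_exp_arg_mul_I (μ i)]
  push_cast
  ring

theorem not_dense_iUnion_image_pow_mul {ι : Type*} [Fintype ι] (μ : ι → ℂ)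
    (E : Submodule ℝ (ι → ℂ)) (hE : finrank ℝ E < Fintype.card ι) :
    ¬ Dense (⋃ k : ℕ, (μ ^ k * ·) '' (E : Set (ι → ℂ))) := by
  intro hdense
  set d : ι → ℝ := fun i => ‖μ i‖
  set A : Set (ι → ℂ) := ⋃ k : ℕ, (E.map (coordScale (d ^ k)) : Set (ι → ℂ))
  let W : Option ℕ → Submodule ℝ (ι → ℂ) :=
    fun o => o.elim (limitSubspace d E) fun k => E.map (coordScale (d ^ k))
  refine iUnion_univ_smul_submodule_ne_univ W (fun o => ?_) (univ_subset_iff.1 ?_)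
  · refine lt_of_le_of_lt ?_ hE
    cases o with
    | none => exact finrank_limitSubspace_le d E
    | some k => exact Submodule.finrank_map_le _ E
  calc univ = closure (⋃ k : ℕ, (μ ^ k * ·) '' (E : Set (ι → ℂ))) := hdense.closure_eq.symm
    _ ⊆ closure ((univ : Set (ι → Circle)) • A) := by
        refine closure_mono (iUnion_subset fun k => ?_)
        rintro _ ⟨z, hz, rfl⟩
        beta_reduce
        rw [pow_mul_eq_smul_coordScale_norm]
        exact smul_mem_smul (mem_univ _) (mem_iUnion.2 ⟨k, Submodule.mem_map_of_mem hz⟩)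
    _ ⊆ (univ : Set (ι → Circle)) • closure A :=
        closure_minimal (smul_subset_smul_left subset_closure)
          (isClosed_closure.smul_left_of_isCompact isCompact_univ)
    _ ⊆ (univ : Set (ι → Circle)) • (A ∪ limitSubspace d E) :=
        smul_subset_smul_left (closure_iUnion_map_coordScale_subset (fun i => norm_nonneg _) E)
    _ = ⋃ o, (univ : Set (ι → Circle)) • (W o : Set (ι → ℂ)) := by
        rw [iUnion_option, smul_union, smul_iUnion, union_comm]
        rfl

section BlockRotations

variable {ι : Type*}

def complexOfPairs : (Fin 2 × ι → ℝ) →ₗ[ℝ] (ι → ℂ) where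
  toFun x i := ⟨x (0, i), x (1, i)⟩
  map_add' x y := by funext i; apply Complex.ext <;> simp
  map_smul' r x := by funext i; apply Complex.ext <;> simp

lemma complexOfPairs_surjective :
    Function.Surjective (complexOfPairs : (Fin 2 × ι → ℝ) →ₗ[ℝ] (ι → ℂ)) :=
  fun z => ⟨fun p => if p.1 = 0 then (z p.2).re else (z p.2).im,
    funext fun i => by simp [complexOfPairs]⟩

lemma complexOfPairs_blockDiagonal_rotM_mulVec [Fintype ι] [DecidableEq ι] (a θ : ι → ℝ)
    (x : Fin 2 × ι → ℝ) :
    complexOfPairs ((blockDiagonal fun i => a i • rotM (θ i)) *ᵥ x) =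
      (fun i => a i * Complex.exp (θ i * Complex.I)) * complexOfPairs x := by
  funext i
  apply Complex.ext <;>
    simp [complexOfPairs, mulVec, dotProduct, blockDiagonal_apply, Fintype.sum_prod_type, rotM,
      Complex.exp_re, Complex.exp_im] <;> ring

end BlockRotations

theorem stmt6 (N : ℕ) (hN : 2 ≤ N) (a θ : Fin N → ℝ) :
    ¬ NSupercyclic (N - 1)
      (Matrix.blockDiagonal fun i : Fin N => a i • rotM (θ i)).mulVecLin := by
  rintro ⟨E, hE, hdense⟩
  set T := (Matrix.blockDiagonal fun i : Fin N => a i • rotM (θ i)).mulVecLin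
  set μ : Fin N → ℂ := fun i => a i * Complex.exp (θ i * Complex.I)
  have hconj (k : ℕ) (x : Fin 2 × Fin N → ℝ) :
      complexOfPairs ((T ^ k) x) = μ ^ k * complexOfPairs x := by
    have hsemiconj : Function.Semiconj complexOfPairs T (μ * ·) :=
      complexOfPairs_blockDiagonal_rotM_mulVec a θ
    rw [Module.End.coe_pow, (hsemiconj.iterate_right k).eq, mul_left_iterate]
  refine not_dense_iUnion_image_pow_mul μ (E.map complexOfPairs) ?_ ?_
  · have := Submodule.finrank_map_le complexOfPairs E
    rw [Fintype.card_fin]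
    omega
  · simpa [image_iUnion, image_image, hconj] using
      complexOfPairs_surjective.denseRange.dense_image
        (LinearMap.continuous_of_finiteDimensional _) hdense
end

section
/- Let T = ⊕_{i=1}^ρ 𝒜ᵢ be a primary matrix of order ρ, i.e., each 𝒜ᵢ is either the 1×1 identity matrix (1) or a 2×2 rotation matrix R_{θᵢ}, acting on ℝ^N where N = Σᵢ size(𝒜ᵢ). Then T is not (ρ−1)-supercyclic. -/
open Matrix

/-- A primary block: either the 1×1 identity (the scalar 1 acting on ℝ) or a
2×2 rotation `R_θ` acting on ℝ², encoded by `none` resp. `some θ`. -/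
noncomputable def primBlock : Option ℝ → Σ n : ℕ, Matrix (Fin n) (Fin n) ℝ
  | none => ⟨1, 1⟩
  | some θ => ⟨2, rotM θ⟩

/-!
The vector `Φ x = (‖xᵢ‖²)ᵢ` of squared norms of the blocks of `x` is invariant under a
block-diagonal orthogonal operator `T`, so `Φ` maps a dense orbit `⋃ₖ Tᵏ(E)` onto `Φ(E)`, and
hence `Φ(E)` is dense in the range of `Φ`, the closed positive orthant of `ℝ^ρ`. Since `Φ` is
proper, `Φ(E)` is closed, so it contains the orthant and has nonempty interior. But `Φ` is
smooth and `dim E < ρ`, so by the easy case of Sard's theorem `Φ(E)` has dense complement.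
-/

open Set Filter Topology Module

theorem Matrix.sum_sq_mulVec_of_transpose_mul_self {R m : Type*} [CommSemiring R] [Fintype m]
    [DecidableEq m] {A : Matrix m m R} (hA : Aᵀ * A = 1) (v : m → R) :
    ∑ j, (A *ᵥ v) j ^ 2 = ∑ j, v j ^ 2 := by
  have h : (A *ᵥ v) ⬝ᵥ (A *ᵥ v) = v ⬝ᵥ v := by
    rw [dotProduct_mulVec, ← mulVec_transpose, mulVec_mulVec, hA, one_mulVec]
  simpa only [dotProduct, sq] using h

theorem Matrix.blockDiagonal'_mulVec_apply {α ι : Type*} [NonUnitalNonAssocSemiring α]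
    [Fintype ι] [DecidableEq ι] {κ : ι → Type*} [∀ i, Fintype (κ i)]
    (M : ∀ i, Matrix (κ i) (κ i) α) (x : (Σ i, κ i) → α) (i : ι) (j : κ i) :
    (blockDiagonal' M *ᵥ x) ⟨i, j⟩ = (M i *ᵥ fun j' => x ⟨i, j'⟩) j := by
  rw [mulVec, dotProduct, ← Finset.univ_sigma_univ, Finset.sum_sigma,
    Finset.sum_eq_single_of_mem i (Finset.mem_univ i)]
  · simp only [blockDiagonal'_apply_eq, mulVec, dotProduct]
  · intro i' _ hi'
    exact Finset.sum_eq_zero fun j' _ => by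
      rw [blockDiagonal'_apply_ne _ _ _ (Ne.symm hi'), zero_mul]

section BlockSqNorm

variable {ι : Type*} {κ : ι → Type*} [∀ i, Fintype (κ i)]

def blockSqNorm (x : (Σ i, κ i) → ℝ) (i : ι) : ℝ :=
  ∑ j, x ⟨i, j⟩ ^ 2

theorem mem_range_blockSqNorm [∀ i, Nonempty (κ i)] {y : ι → ℝ} (hy : ∀ i, 0 ≤ y i) :
    y ∈ range (blockSqNorm : ((Σ i, κ i) → ℝ) → ι → ℝ) := by
  refine ⟨fun a => √(y a.1 / Fintype.card (κ a.1)), funext fun i => ?_⟩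
  have hcard : (Fintype.card (κ i) : ℝ) ≠ 0 := Nat.cast_ne_zero.2 Fintype.card_ne_zero
  change ∑ _j : κ i, √(y i / Fintype.card (κ i)) ^ 2 = y i
  rw [Real.sq_sqrt (div_nonneg (hy i) (Nat.cast_nonneg _)), Finset.sum_const, Finset.card_univ,
    nsmul_eq_mul]
  field_simp

variable [Fintype ι]

theorem blockSqNorm_blockDiagonal'_mulVec [DecidableEq ι] [∀ i, DecidableEq (κ i)]
    {M : ∀ i, Matrix (κ i) (κ i) ℝ} (hM : ∀ i, (M i)ᵀ * M i = 1) (x : (Σ i, κ i) → ℝ) :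
    blockSqNorm (blockDiagonal' M *ᵥ x) = blockSqNorm x := by
  funext i
  simp only [blockSqNorm, Matrix.blockDiagonal'_mulVec_apply]
  exact Matrix.sum_sq_mulVec_of_transpose_mul_self (hM i) _

theorem contDiff_blockSqNorm {n : WithTop ℕ∞} :
    ContDiff ℝ n (blockSqNorm : ((Σ i, κ i) → ℝ) → ι → ℝ) :=
  contDiff_pi.2 fun _ => ContDiff.sum fun _ _ => (contDiff_apply ℝ ℝ _).pow 2

theorem continuous_blockSqNorm :
    Continuous (blockSqNorm : ((Σ i, κ i) → ℝ) → ι → ℝ) :=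
  contDiff_blockSqNorm.continuous (n := 0)

theorem sq_le_norm_blockSqNorm (x : (Σ i, κ i) → ℝ) (a : Σ i, κ i) :
    x a ^ 2 ≤ ‖blockSqNorm x‖ :=
  calc x a ^ 2 ≤ blockSqNorm x a.1 :=
        Finset.single_le_sum (f := fun j => x ⟨a.1, j⟩ ^ 2) (fun _ _ => sq_nonneg _)
          (Finset.mem_univ a.2)
    _ ≤ ‖blockSqNorm x a.1‖ := Real.le_norm_self _
    _ ≤ ‖blockSqNorm x‖ := norm_le_pi_norm _ _

theorem isProperMap_blockSqNorm :
    IsProperMap (blockSqNorm : ((Σ i, κ i) → ℝ) → ι → ℝ) := by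
  refine isProperMap_iff_isCompact_preimage.2 ⟨continuous_blockSqNorm, fun K hK => ?_⟩
  obtain ⟨C, hC⟩ := isBounded_iff_forall_norm_le.1 hK.isBounded
  refine Metric.isCompact_of_isClosed_isBounded
    (hK.isClosed.preimage continuous_blockSqNorm)
    (isBounded_iff_forall_norm_le.2 ⟨√C, fun x hx => ?_⟩)
  refine (pi_norm_le_iff_of_nonneg (Real.sqrt_nonneg C)).2 fun a => ?_
  rw [Real.norm_eq_abs]
  exact Real.abs_le_sqrt ((sq_le_norm_blockSqNorm x a).trans (hC _ hx))

end BlockSqNorm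

theorem range_subset_closure_image_of_dense_iUnion_iterate_image {X Y : Type*}
    [TopologicalSpace X] [TopologicalSpace Y] {T : X → X} {Φ : X → Y} (hΦ : Continuous Φ)
    (hΦT : ∀ x, Φ (T x) = Φ x) {S : Set X} (hS : Dense (⋃ k : ℕ, T^[k] '' S)) :
    range Φ ⊆ closure (Φ '' S) := by
  have hiter : ∀ k x, Φ (T^[k] x) = Φ x := fun k x => by
    simpa using (Function.Semiconj.iterate_right (f := Φ) (gb := id) hΦT k) x
  calc range Φ = Φ '' closure (⋃ k : ℕ, T^[k] '' S) := by rw [hS.closure_eq, image_univ]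
    _ ⊆ closure (Φ '' ⋃ k : ℕ, T^[k] '' S) := image_closure_subset_closure_image hΦ
    _ ⊆ closure (Φ '' S) := by
      refine closure_mono ?_
      simp only [image_iUnion, image_image, hiter, iUnion_subset_iff]
      exact fun _ => subset_rfl

theorem not_nSupercyclic_blockDiagonal' {ι : Type*} [Fintype ι] [DecidableEq ι]
    {κ : ι → Type*} [∀ i, Fintype (κ i)] [∀ i, DecidableEq (κ i)] [∀ i, Nonempty (κ i)]
    {M : ∀ i, Matrix (κ i) (κ i) ℝ} (hM : ∀ i, (M i)ᵀ * M i = 1) {n : ℕ}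
    (hn : n < Fintype.card ι) : ¬ NSupercyclic n (blockDiagonal' M).mulVecLin := by
  rintro ⟨E, hE, hdense⟩
  set Φ : ((Σ i, κ i) → ℝ) → ι → ℝ := blockSqNorm
  simp only [Module.End.coe_pow] at hdense
  have hclosed : IsClosed (Φ '' E) :=
    isProperMap_blockSqNorm.isClosedMap _ E.closed_of_finiteDimensional
  have hrange : range Φ ⊆ Φ '' E :=
    (range_subset_closure_image_of_dense_iUnion_iterate_image continuous_blockSqNorm
      (blockSqNorm_blockDiagonal'_mulVec hM) hdense).trans hclosed.closure_subset
  have hnhds : Φ '' E ∈ 𝓝 (1 : ι → ℝ) :=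
    mem_of_superset (set_pi_mem_nhds finite_univ fun _ _ => Ioi_mem_nhds one_pos)
      fun y hy => hrange (mem_range_blockSqNorm fun i => (hy i trivial).le)
  have hthin : Dense (range (Φ ∘ E.subtypeL))ᶜ :=
    (contDiff_blockSqNorm.comp E.subtypeL.contDiff).dense_compl_range_of_finrank_lt_finrank
      (by simpa [hE] using hn)
  rw [range_comp, Submodule.coe_subtypeL, Submodule.coe_subtype, Subtype.range_coe,
    ← interior_eq_empty_iff_dense_compl] at hthin
  exact notMem_empty _ (hthin ▸ mem_interior_iff_mem_nhds.2 hnhds)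

theorem rotM_transpose_mul_self (θ : ℝ) : (rotM θ)ᵀ * rotM θ = 1 := by
  ext i j
  fin_cases i <;> fin_cases j <;>
    simp [rotM, mul_apply, Fin.sum_univ_two, ← sq, mul_comm]

theorem primBlock_transpose_mul_self : ∀ o, (primBlock o).2ᵀ * (primBlock o).2 = 1
  | none => (by simp : (1 : Matrix (Fin 1) (Fin 1) ℝ)ᵀ * 1 = 1)
  | some θ => rotM_transpose_mul_self θ

instance primBlock_nonempty : ∀ o, Nonempty (Fin (primBlock o).1)
  | none => ⟨(0 : Fin 1)⟩
  | some _ => ⟨(0 : Fin 2)⟩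

theorem stmt7 (ρ : ℕ) (hρ : 1 ≤ ρ) (b : Fin ρ → Option ℝ) :
    ¬ NSupercyclic (ρ - 1)
      (Matrix.blockDiagonal' fun i : Fin ρ => (primBlock (b i)).2).mulVecLin :=
  not_nSupercyclic_blockDiagonal' (fun i => primBlock_transpose_mul_self (b i))
    (by rw [Fintype.card_fin]; omega)
end

section
/- Let N ≥ 3. There is no supercyclic operator on ℝ^N, i.e., there is no bounded linear operator T on ℝ^N and vector x ∈ ℝ^N such that {λ T^k x : λ ∈ ℝ, k ∈ ℕ} is dense in ℝ^N. -/
/-!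
Precomposition with `T` is a `ℂ`-linear endomorphism `T*` of the space of `ℝ`-linear maps
`V → ℂ`, whose complex dimension is `dim V`. If the cone `ℝ · {Tᵏ x}` is dense, no nonzero such
functional vanishes on the orbit of `x`; so every eigenvector `φ` of `T*` has `φ x ≠ 0`, and every
eigenspace of `T*` is a line, which forces `dim V ≤ deg (minpoly T*)`.

An eigenvalue of strictly smaller modulus than another one, or a Jordan block, yields functionals
with `φ x ≠ 0` and `φ (Tᵏ x) = o(ψ (Tᵏ x))`. Then, near `x`, the dense cone can only meet the
finitely many lines `ℝ Tᵏ x` for small `k`, which is absurd in dimension `≥ 2`. Hence the minimal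
polynomial of `T*` has simple roots, all of the same modulus. For eigenvectors `φ, ψ` the closed
relation `‖φ v‖ ‖ψ x‖ = ‖ψ v‖ ‖φ x‖` holds on the cone, hence everywhere; at `v = x + T x` it gives
`‖1 + α‖ = ‖1 + β‖`, so any two eigenvalues are equal or conjugate, and `dim V ≤ 2`.
-/

open Module Filter Asymptotics Polynomial LinearMap ComplexConjugate

section LinearAlgebra

variable {K E F G : Type*} [Field K] [AddCommGroup E] [Module K E] [AddCommGroup F] [Module K F]
  [AddCommGroup G] [Module K G]

theorem LinearMap.finrank_ker_comp_le [FiniteDimensional K E] [FiniteDimensional K F]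
    (g : F →ₗ[K] G) (h : E →ₗ[K] F) :
    finrank K (ker (g ∘ₗ h)) ≤ finrank K (ker g) + finrank K (ker h) := by
  set p := ker (g ∘ₗ h)
  have hrange : range (h.domRestrict p) ≤ ker g := by
    rintro _ ⟨v, rfl⟩
    exact v.2
  have hker : finrank K (ker (h.domRestrict p)) = finrank K (ker h) := by
    rw [ker_domRestrict]
    exact (Submodule.comapSubtypeEquivOfLe (ker_le_ker_comp h g)).finrank_eq
  have := (h.domRestrict p).finrank_range_add_finrank_ker
  have := Submodule.finrank_mono hrange
  omega

variable [FiniteDimensional K E]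

namespace Module.End

theorem finrank_ker_aeval_multiset_prod_le {f : End K E}
    (hf : ∀ μ, finrank K (f.eigenspace μ) ≤ 1) (s : Multiset K) :
    finrank K (ker (aeval f (s.map fun μ => X - C μ).prod)) ≤ Multiset.card s := by
  induction s using Multiset.induction_on with
  | empty =>
    rw [Multiset.map_zero, Multiset.prod_zero, map_one, one_eq_id, ker_id, finrank_bot]
    exact Nat.zero_le _
  | cons μ s ih =>
    rw [Multiset.map_cons, Multiset.prod_cons, map_mul, mul_eq_comp, Multiset.card_cons, add_comm]
    refine (finrank_ker_comp_le _ _).trans (add_le_add ?_ ih)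
    rw [map_sub, aeval_X, aeval_C, Algebra.algebraMap_eq_smul_one, ← eigenspace_def]
    exact hf μ

theorem finrank_le_natDegree_minpoly [IsAlgClosed K] {f : End K E}
    (hf : ∀ μ, finrank K (f.eigenspace μ) ≤ 1) : finrank K E ≤ (minpoly K f).natDegree := by
  have hprod := prod_multiset_X_sub_C_of_monic_of_roots_card_eq
    (minpoly.monic (Algebra.IsIntegral.isIntegral (R := K) f)) IsAlgClosed.card_roots_eq_natDegree
  have := finrank_ker_aeval_multiset_prod_le hf (minpoly K f).roots
  rwa [hprod, minpoly.aeval, ker_zero, finrank_top, IsAlgClosed.card_roots_eq_natDegree] at this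

theorem exists_jordanChain_of_sq_dvd_minpoly {f : End K E} {μ : K}
    (h : (X - C μ) ^ 2 ∣ minpoly K f) : ∃ φ ψ, φ ≠ 0 ∧ f φ = μ • φ ∧ f ψ = μ • ψ + φ := by
  obtain ⟨q, hq⟩ := h
  have hint := Algebra.IsIntegral.isIntegral (R := K) f
  have hq_monic : q.Monic := ((monic_X_sub_C μ).pow 2).of_mul_monic_left (hq ▸ minpoly.monic hint)
  have hr : aeval f ((X - C μ) * q) ≠ 0 :=
    minpoly.aeval_ne_zero_of_dvdNotUnit_minpoly hint ((monic_X_sub_C μ).mul hq_monic)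
      ⟨((monic_X_sub_C μ).mul hq_monic).ne_zero, X - C μ, not_isUnit_X_sub_C μ, by rw [hq]; ring⟩
  obtain ⟨w, hw⟩ : ∃ w, aeval f ((X - C μ) * q) w ≠ 0 := by
    by_contra! h
    exact hr (LinearMap.ext h)
  have hmin : aeval f (X - C μ) (aeval f ((X - C μ) * q) w) = 0 := by
    rw [← mul_apply, ← map_mul, ← mul_assoc, ← sq, ← hq, minpoly.aeval, LinearMap.zero_apply]
  refine ⟨_, aeval f q w, hw, ?_, ?_⟩
  · simpa [sub_eq_zero] using hmin
  · simp

end Module.End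

end LinearAlgebra

theorem Complex.eq_or_eq_conj_of_norm_eq {α β : ℂ} (h₁ : ‖α‖ = ‖β‖) (h₂ : ‖1 + α‖ = ‖1 + β‖) :
    β = α ∨ β = conj α := by
  have e₁ := congrArg (· ^ 2) h₁
  have e₂ := congrArg (· ^ 2) h₂
  simp only [Complex.sq_norm, Complex.normSq_apply, Complex.add_re, Complex.add_im,
    Complex.one_re, Complex.one_im] at e₁ e₂
  have hre : β.re = α.re := by nlinarith
  have him : (β.im - α.im) * (β.im + α.im) = 0 := by nlinarith
  rcases mul_eq_zero.1 him with h | h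
  · exact Or.inl (Complex.ext hre (by linarith))
  · exact Or.inr (Complex.ext (by simpa using hre) (by simp; linarith))

section Supercyclic

variable {V : Type*} [NormedAddCommGroup V] [NormedSpace ℝ V]

theorem interior_biUnion_submodule_eq_empty [FiniteDimensional ℝ V] {ι : Type*} (s : Finset ι)
    {p : ι → Submodule ℝ V} (hp : ∀ i ∈ s, p i ≠ ⊤) : interior (⋃ i ∈ s, (p i : Set V)) = ∅ := by
  classical
  induction s using Finset.induction_on with
  | empty => simp
  | insert i s _ ih =>
    rw [Finset.set_biUnion_insert, interior_union_isClosed_of_interior_empty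
      (p i).closed_of_finiteDimensional (ih fun j hj => hp j (Finset.mem_insert_of_mem hj))]
    by_contra h
    exact hp i (Finset.mem_insert_self i s)
      ((p i).eq_top_of_nonempty_interior' (Set.nonempty_iff_ne_empty.2 h))

def IsSupercyclicVector (T : V →ₗ[ℝ] V) (x : V) : Prop :=
  Dense {y : V | ∃ (c : ℝ) (k : ℕ), y = c • (T ^ k) x}

variable {T : V →ₗ[ℝ] V} {x : V}

theorem LinearMap.apply_pow_of_comp_eq_smul {α : ℂ} {φ : V →ₗ[ℝ] ℂ} (hφ : φ ∘ₗ T = α • φ)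
    (k : ℕ) (v : V) : φ ((T ^ k) v) = α ^ k * φ v := by
  induction k with
  | zero => simp
  | succ k ih =>
    rw [pow_succ', Module.End.mul_apply, ← comp_apply, hφ, smul_apply, ih, smul_eq_mul, pow_succ']
    ring

theorem LinearMap.mul_apply_pow_of_comp_eq_smul_add {α : ℂ} {φ ψ : V →ₗ[ℝ] ℂ}
    (hφ : φ ∘ₗ T = α • φ) (hψ : ψ ∘ₗ T = α • ψ + φ) (k : ℕ) (v : V) :
    α * ψ ((T ^ k) v) = α ^ k * (α * ψ v + k * φ v) := by
  induction k with
  | zero => simp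
  | succ k ih =>
    rw [pow_succ', Module.End.mul_apply, ← comp_apply, hψ, add_apply, smul_apply, smul_eq_mul,
      mul_add, ih, apply_pow_of_comp_eq_smul hφ]
    push_cast
    ring

namespace IsSupercyclicVector

theorem forall_of_isClosed (hx : IsSupercyclicVector T x) {P : V → Prop}
    (hP : IsClosed {v | P v}) (h : ∀ (c : ℝ) (k : ℕ), P (c • (T ^ k) x)) (v : V) : P v :=
  Dense.induction hx (by rintro _ ⟨c, k, rfl⟩; exact h c k) hP v

variable [FiniteDimensional ℝ V]

open Module.End

theorem apply_ne_zero (hx : IsSupercyclicVector T x) {α : ℂ} {φ : V →ₗ[ℝ] ℂ} (hφ0 : φ ≠ 0)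
    (hφ : φ ∘ₗ T = α • φ) : φ x ≠ 0 := by
  intro h
  refine hφ0 (LinearMap.ext fun v => ?_)
  refine hx.forall_of_isClosed (P := fun v => φ v = 0)
    (isClosed_eq φ.continuous_of_finiteDimensional continuous_const) (fun c k => ?_) v
  simp [apply_pow_of_comp_eq_smul hφ, h]

theorem finrank_eigenspace_le_one (hx : IsSupercyclicVector T x) (α : ℂ) :
    finrank ℂ (eigenspace (lcomp ℂ ℂ T) α) ≤ 1 := by
  have hinj : Function.Injective (applyₗ' ℂ x ∘ₗ (eigenspace (lcomp ℂ ℂ T) α).subtype) := by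
    rw [← ker_eq_bot, eq_bot_iff]
    rintro ⟨φ, hφ⟩ h
    by_contra hne
    exact hx.apply_ne_zero (φ := φ) (by simpa using hne) (mem_eigenspace_iff.1 hφ) h
  simpa using LinearMap.finrank_le_finrank_of_injective hinj

theorem not_isLittleO (hx : IsSupercyclicVector T x) (hV : 2 ≤ finrank ℝ V)
    {φ ψ : V →ₗ[ℝ] ℂ} (hφx : φ x ≠ 0) :
    ¬ (fun k => φ ((T ^ k) x)) =o[atTop] fun k => ψ ((T ^ k) x) := by
  intro ho
  set ε := ‖φ x‖ / (‖ψ x‖ + 1) with hε_def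
  have hε : 0 < ε := by positivity
  obtain ⟨K, hK⟩ := eventually_atTop.1 (ho.def hε)
  have hφ := φ.continuous_of_finiteDimensional
  have hψ := ψ.continuous_of_finiteDimensional
  set U := {v : V | ε * ‖ψ v‖ < ‖φ v‖}
  have hU : IsOpen U := isOpen_lt (continuous_const.mul hψ.norm) hφ.norm
  have hxU : x ∈ U := by
    show ε * ‖ψ x‖ < ‖φ x‖
    rw [hε_def, div_mul_eq_mul_div, div_lt_iff₀ (by positivity)]
    nlinarith [norm_pos_iff.2 hφx]
  set lines := ⋃ k ∈ Finset.range K, ((ℝ ∙ (T ^ k) x : Submodule ℝ V) : Set V)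
  have hcover : U ⊆ lines := by
    intro v hv
    refine (hx.forall_of_isClosed (P := fun v => ‖φ v‖ ≤ ε * ‖ψ v‖ ∨ v ∈ lines) ?_ ?_ v
      ).resolve_left (not_le.2 hv)
    · exact (isClosed_le hφ.norm (continuous_const.mul hψ.norm)).union
        (isClosed_biUnion_finset fun k _ => Submodule.closed_of_finiteDimensional _)
    · intro c k
      rcases le_or_gt K k with hk | hk
      · left
        rw [map_smul, map_smul, norm_smul, norm_smul, mul_left_comm]
        exact mul_le_mul_of_nonneg_left (hK k hk) (norm_nonneg c)
      · right
        exact Set.mem_biUnion (Finset.mem_range.2 hk)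
          (Submodule.smul_mem _ c (Submodule.mem_span_singleton_self _))
  have hint := interior_maximal hcover hU
  rw [interior_biUnion_submodule_eq_empty] at hint
  · exact hint hxU
  · intro k _ htop
    have := finrank_span_le_card (R := ℝ) ({(T ^ k) x} : Set V)
    rw [htop, finrank_top, Set.toFinset_singleton, Finset.card_singleton] at this
    omega

theorem norm_le_of_hasEigenvalue (hx : IsSupercyclicVector T x) (hV : 2 ≤ finrank ℝ V) {α β : ℂ}
    (hα : HasEigenvalue (lcomp ℂ ℂ T) α) (hβ : HasEigenvalue (lcomp ℂ ℂ T) β) : ‖β‖ ≤ ‖α‖ := by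
  by_contra! hlt
  obtain ⟨φ, hφ⟩ := hα.exists_hasEigenvector
  obtain ⟨ψ, hψ⟩ := hβ.exists_hasEigenvector
  have hψx := hx.apply_ne_zero hψ.2 hψ.apply_eq_smul
  apply hx.not_isLittleO hV (hx.apply_ne_zero hφ.2 hφ.apply_eq_smul) (ψ := ψ)
  simp only [apply_pow_of_comp_eq_smul (φ := φ) hφ.apply_eq_smul,
    apply_pow_of_comp_eq_smul (φ := ψ) hψ.apply_eq_smul]
  have hpow : (fun k : ℕ => α ^ k) =o[atTop] fun k => β ^ k := by
    rw [← isLittleO_norm_norm]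
    simpa only [norm_pow] using isLittleO_pow_pow_of_lt_left (norm_nonneg α) hlt
  exact hpow.mul_isBigO (isBigO_const_const _ hψx _)

theorem comp_ne_smul_add (hx : IsSupercyclicVector T x) (hV : 2 ≤ finrank ℝ V) {α : ℂ}
    {φ ψ : V →ₗ[ℝ] ℂ} (hφ0 : φ ≠ 0) (hφ : φ ∘ₗ T = α • φ) : ψ ∘ₗ T ≠ α • ψ + φ := by
  intro hψ
  have hφx := hx.apply_ne_zero hφ0 hφ
  apply hx.not_isLittleO hV hφx (ψ := ψ)
  simp only [apply_pow_of_comp_eq_smul hφ]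
  rcases eq_or_ne α 0 with rfl | hα
  · refine (isLittleO_zero _ _).congr' ?_ EventuallyEq.rfl
    filter_upwards [eventually_ge_atTop 1] with k hk
    simp [zero_pow (by omega : k ≠ 0)]
  · have hψk (k : ℕ) : ψ ((T ^ k) x) = α ^ k * (ψ x + k * (φ x / α)) := by
      have := mul_apply_pow_of_comp_eq_smul_add hφ hψ k x
      field_simp
      linear_combination this
    simp only [hψk]
    refine (isBigO_refl _ _).mul_isLittleO (isLittleO_const_left.2 (Or.inr ?_))
    have hc : 0 < ‖φ x / α‖ := norm_pos_iff.2 (div_ne_zero hφx hα)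
    refine tendsto_atTop_mono (fun k => ?_) (tendsto_atTop_add_const_right _ (-‖ψ x‖)
      (tendsto_natCast_atTop_atTop.atTop_mul_const hc))
    have := norm_sub_norm_le ((k : ℂ) * (φ x / α)) (-ψ x)
    rwa [norm_mul, Complex.norm_natCast, norm_neg, sub_neg_eq_add, add_comm] at this

theorem eq_or_eq_conj_of_hasEigenvalue (hx : IsSupercyclicVector T x) (hV : 2 ≤ finrank ℝ V)
    {α β : ℂ} (hα : HasEigenvalue (lcomp ℂ ℂ T) α) (hβ : HasEigenvalue (lcomp ℂ ℂ T) β) :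
    β = α ∨ β = conj α := by
  have hnorm : ‖α‖ = ‖β‖ :=
    le_antisymm (hx.norm_le_of_hasEigenvalue hV hβ hα) (hx.norm_le_of_hasEigenvalue hV hα hβ)
  obtain ⟨φ, hφ⟩ := hα.exists_hasEigenvector
  obtain ⟨ψ, hψ⟩ := hβ.exists_hasEigenvector
  have hφT := apply_pow_of_comp_eq_smul (φ := φ) hφ.apply_eq_smul
  have hψT := apply_pow_of_comp_eq_smul (φ := ψ) hψ.apply_eq_smul
  have hφx := hx.apply_ne_zero hφ.2 hφ.apply_eq_smul
  have hψx := hx.apply_ne_zero hψ.2 hψ.apply_eq_smul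
  have hratio : ∀ v, ‖φ v‖ * ‖ψ x‖ = ‖ψ v‖ * ‖φ x‖ := by
    refine hx.forall_of_isClosed (isClosed_eq ?_ ?_) fun c k => ?_
    · exact φ.continuous_of_finiteDimensional.norm.mul continuous_const
    · exact ψ.continuous_of_finiteDimensional.norm.mul continuous_const
    · simp only [map_smul, norm_smul, hφT, hψT, norm_mul, norm_pow, hnorm]
      ring
  refine Complex.eq_or_eq_conj_of_norm_eq hnorm ?_
  have h := hratio (x + T x)
  have h1 := hφT 1 x
  have h2 := hψT 1 x
  rw [pow_one, pow_one] at h1 h2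
  rw [map_add, map_add, h1, h2, ← one_add_mul, ← one_add_mul, norm_mul, norm_mul] at h
  have : 0 < ‖φ x‖ * ‖ψ x‖ := by positivity
  nlinarith

theorem finrank_le_two (hx : IsSupercyclicVector T x) : finrank ℝ V ≤ 2 := by
  by_contra! hV
  set S := lcomp ℂ ℂ T
  have hnodup : (minpoly ℂ S).roots.Nodup := by
    refine Multiset.nodup_iff_count_le_one.2 fun α => ?_
    by_contra! h
    rw [count_roots] at h
    obtain ⟨φ, ψ, hφ0, hφ, hψ⟩ := exists_jordanChain_of_sq_dvd_minpoly
      ((le_rootMultiplicity_iff (minpoly.ne_zero (Algebra.IsIntegral.isIntegral S))).1 h)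
    exact hx.comp_ne_smul_add hV.le hφ0 hφ hψ
  have hdeg : finrank ℝ V ≤ (minpoly ℂ S).roots.toFinset.card := by
    rw [Multiset.toFinset_card_of_nodup hnodup, IsAlgClosed.card_roots_eq_natDegree,
      ← finrank_linearMap_self ℝ ℂ V]
    exact finrank_le_natDegree_minpoly hx.finrank_eigenspace_le_one
  have hroot {μ : ℂ} (hμ : μ ∈ (minpoly ℂ S).roots.toFinset) : HasEigenvalue S μ :=
    hasEigenvalue_of_isRoot (isRoot_of_mem_roots (Multiset.mem_toFinset.1 hμ))
  obtain ⟨α, hα⟩ : (minpoly ℂ S).roots.toFinset.Nonempty := Finset.card_pos.1 (by omega)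
  have hsub : (minpoly ℂ S).roots.toFinset ⊆ {α, conj α} := fun β hβ => by
    simpa using hx.eq_or_eq_conj_of_hasEigenvalue hV.le (hroot hα) (hroot hβ)
  have := (Finset.card_le_card hsub).trans Finset.card_le_two
  omega

end IsSupercyclicVector

end Supercyclic

theorem stmt11 (N : ℕ) (hN : 3 ≤ N) :
    ¬ ∃ (T : (Fin N → ℝ) →ₗ[ℝ] (Fin N → ℝ)) (x : Fin N → ℝ),
      Dense {y : Fin N → ℝ | ∃ (c : ℝ) (k : ℕ), y = c • (T ^ k) x} := by
  rintro ⟨T, x, hx⟩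
  have := IsSupercyclicVector.finrank_le_two (T := T) (x := x) hx
  rw [finrank_fin_fun] at this
  omega
end

section
/- Let n < N and let T be an invertible linear operator on ℝ^N. Then T is strongly n-supercyclic if and only if (T^{-1})* is strongly (N−n)-supercyclic; moreover, M is a strongly n-supercyclic subspace for T if and only if its orthogonal complement M^⊥ is a strongly (N−n)-supercyclic subspace for (T^{-1})*. -/
open Matrix

/-- The `n`-th Grassmannian of a topological real vector space `X`, i.e. the set of
`n`-dimensional subspaces, carries the quotient topology coinduced by the span map
from linearly independent `n`-tuples. -/
noncomputable instance grassTopology (X : Type*) [AddCommGroup X] [Module ℝ X]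
    [TopologicalSpace X] (n : ℕ) :
    TopologicalSpace {M : Submodule ℝ X // Module.finrank ℝ M = n} :=
  TopologicalSpace.coinduced
    (fun v : {v : Fin n → X // LinearIndependent ℝ v} =>
      (⟨Submodule.span ℝ (Set.range v.1), by
        rw [finrank_span_eq_card v.2, Fintype.card_fin]⟩ :
        {M : Submodule ℝ X // Module.finrank ℝ M = n}))
    inferInstance

/-- `M` is a strongly `n`-supercyclic subspace for `T`: it is `n`-dimensional, all its
iterates `T^k(M)` are `n`-dimensional, and the orbit `{T^k(M) : k ∈ ℕ}` is dense in the
`n`-th Grassmannian. -/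
def SCSubspace {X : Type*} [AddCommGroup X] [Module ℝ X] [TopologicalSpace X]
    (n : ℕ) (T : X →ₗ[ℝ] X) (M : Submodule ℝ X) : Prop :=
  Module.finrank ℝ M = n ∧ (∀ k : ℕ, Module.finrank ℝ (M.map (T ^ k)) = n) ∧
    Dense {P : {M : Submodule ℝ X // Module.finrank ℝ M = n} |
      ∃ k : ℕ, (P : Submodule ℝ X) = M.map (T ^ k)}

/-- `T` is strongly `n`-supercyclic if it admits a strongly `n`-supercyclic subspace. -/
def StronglyNSupercyclic {X : Type*} [AddCommGroup X] [Module ℝ X] [TopologicalSpace X]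
    (n : ℕ) (T : X →ₗ[ℝ] X) : Prop :=
  ∃ M : Submodule ℝ X, SCSubspace n T M

/-!
For an invertible `S`, the orthogonal complement of `S^k(M)` is `((S⁻¹)*)^k(Mᗮ)`, so taking
orthogonal complements maps the `S`-orbit of `M` in the `a`-th Grassmannian onto the
`(S⁻¹)*`-orbit of `Mᗮ` in the `b`-th Grassmannian, `a + b = dim E`. This map is an involutive
homeomorphism between the two Grassmannians, hence it preserves density of orbits. Its continuity
is checked on tuples: near a linearly independent tuple `v₀`, the orthogonal complement of
`span v` is spanned by the components, orthogonal to `span v`, of a fixed basis of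
`(span v₀)ᗮ`, and these depend continuously on `v` through the inverse Gram matrix of `v`.
-/

open Module Submodule Set
open scoped RealInnerProductSpace

local notation "Gr[" X ", " n "]" => {M : Submodule ℝ X // Module.finrank ℝ M = n}

section SpanGrassmannian

variable {X : Type*} [AddCommGroup X] [Module ℝ X]

/-- The quotient map defining `grassTopology`. -/
noncomputable def spanGrassmannian (n : ℕ) : {v : Fin n → X // LinearIndependent ℝ v} → Gr[X, n] :=
  fun v => ⟨span ℝ (range v.1), by rw [finrank_span_eq_card v.2, Fintype.card_fin]⟩

lemma spanGrassmannian_surjective [FiniteDimensional ℝ X] (n : ℕ) :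
    Function.Surjective (spanGrassmannian (X := X) n) := by
  rintro ⟨P, hP⟩
  let B := finBasisOfFinrankEq ℝ P hP
  refine ⟨⟨P.subtype ∘ B, B.linearIndependent.map' _ P.ker_subtype⟩, Subtype.ext ?_⟩
  change span ℝ (range (P.subtype ∘ B)) = P
  rw [range_comp, span_image, B.span_eq, map_subtype_top]

variable [TopologicalSpace X]

lemma continuous_spanGrassmannian (n : ℕ) : Continuous (spanGrassmannian (X := X) n) :=
  continuous_coinduced_rng

lemma continuous_grassmannian_iff {n : ℕ} {Y : Type*} [TopologicalSpace Y] {f : Gr[X, n] → Y} :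
    Continuous f ↔ Continuous (f ∘ spanGrassmannian n) :=
  continuous_coinduced_dom

end SpanGrassmannian

variable {E : Type*} [NormedAddCommGroup E] [InnerProductSpace ℝ E]

section OrthogonalComponent

variable {a : ℕ}

lemma continuous_gram : Continuous (gram ℝ : (Fin a → E) → Matrix (Fin a) (Fin a) ℝ) :=
  continuous_matrix fun i j => (continuous_apply i).inner (continuous_apply j)

/-- For linearly independent `v`, this is `w` minus its orthogonal projection onto
`span ℝ (range v)`; the Gram-matrix formula makes the dependence on `v` visibly continuous. -/
noncomputable def orthogonalComponent (v : Fin a → E) (w : E) : E :=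
  w - ∑ p, ((gram ℝ v)⁻¹ *ᵥ fun j => ⟪v j, w⟫) p • v p

lemma inner_orthogonalComponent {v : Fin a → E} (hv : LinearIndependent ℝ v) (k : Fin a)
    (w : E) : ⟪v k, orthogonalComponent v w⟫ = 0 := by
  have hG : IsUnit (gram ℝ v).det :=
    isUnit_iff_ne_zero.2 (det_gram_ne_zero_iff_linearIndependent.2 hv)
  have key : ∑ p, ((gram ℝ v)⁻¹ *ᵥ fun j => ⟪v j, w⟫) p * ⟪v k, v p⟫ = ⟪v k, w⟫ := by
    calc _ = (gram ℝ v *ᵥ ((gram ℝ v)⁻¹ *ᵥ fun j => ⟪v j, w⟫)) k := by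
            simp only [mulVec, dotProduct, gram_apply, mul_comm]
      _ = ⟪v k, w⟫ := by rw [mulVec_mulVec, mul_nonsing_inv _ hG, one_mulVec]
  simp only [orthogonalComponent, inner_sub_right, inner_sum, real_inner_smul_right, key, sub_self]

lemma orthogonalComponent_of_mem_orthogonal {v : Fin a → E} {w : E}
    (hw : w ∈ (span ℝ (range v))ᗮ) : orthogonalComponent v w = w := by
  have h : (fun j => ⟪v j, w⟫) = 0 :=
    funext fun j => inner_right_of_mem_orthogonal (subset_span (mem_range_self j)) hw
  simp [orthogonalComponent, h]

lemma continuousOn_orthogonalComponent (w : E) :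
    ContinuousOn (fun v : Fin a → E => orthogonalComponent v w) {v | LinearIndependent ℝ v} := by
  intro v hv
  have hdet : (gram ℝ v).det ≠ 0 := det_gram_ne_zero_iff_linearIndependent.2 hv
  have hinv : ContinuousAt (fun v : Fin a → E => (gram ℝ v)⁻¹) v :=
    (continuousAt_matrix_inv _ (by simpa [Ring.inverse_eq_inv'] using continuousAt_inv₀ hdet)).comp
      continuous_gram.continuousAt
  have hΦ : Continuous fun x : Matrix (Fin a) (Fin a) ℝ × (Fin a → E) =>
      w - ∑ p, (x.1 *ᵥ fun j => ⟪x.2 j, w⟫) p • x.2 p := by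
    have hcoeff : Continuous fun x : Matrix (Fin a) (Fin a) ℝ × (Fin a → E) =>
        x.1 *ᵥ fun j => ⟪x.2 j, w⟫ :=
      continuous_fst.matrix_mulVec (by fun_prop)
    fun_prop
  exact (hΦ.continuousAt.comp (hinv.prodMk continuousAt_id)).continuousWithinAt

end OrthogonalComponent

section FiniteDimensional

variable [FiniteDimensional ℝ E] {a b : ℕ}

lemma finrank_orthogonal_eq (hab : a + b = finrank ℝ E) {K : Submodule ℝ E}
    (hK : finrank ℝ K = a) : finrank ℝ Kᗮ = b := by
  have := K.finrank_add_finrank_orthogonal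
  omega

lemma span_range_orthogonalComponent (hab : a + b = finrank ℝ E) {v : Fin a → E}
    (hv : LinearIndependent ℝ v) {w : Fin b → E}
    (hw : LinearIndependent ℝ fun i => orthogonalComponent v (w i)) :
    span ℝ (range fun i => orthogonalComponent v (w i)) = (span ℝ (range v))ᗮ := by
  refine eq_of_le_of_finrank_eq ?_ ?_
  · refine isOrtho_iff_le.1 (isOrtho_span.2 ?_)
    rintro _ ⟨i, rfl⟩ _ ⟨k, rfl⟩
    rw [real_inner_comm]
    exact inner_orthogonalComponent hv k _
  · rw [finrank_span_eq_card hw, Fintype.card_fin,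
      finrank_orthogonal_eq hab (by rw [finrank_span_eq_card hv, Fintype.card_fin])]

noncomputable def orthogonalGrassmannian (hab : a + b = finrank ℝ E) (P : Gr[E, a]) : Gr[E, b] :=
  ⟨P.1ᗮ, finrank_orthogonal_eq hab P.2⟩

lemma orthogonalGrassmannian_orthogonalGrassmannian (hab : a + b = finrank ℝ E)
    (hba : b + a = finrank ℝ E) (P : Gr[E, a]) :
    orthogonalGrassmannian hba (orthogonalGrassmannian hab P) = P :=
  Subtype.ext P.1.orthogonal_orthogonal

lemma continuous_orthogonalGrassmannian (hab : a + b = finrank ℝ E) :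
    Continuous (orthogonalGrassmannian hab) := by
  refine continuous_grassmannian_iff.2 (continuous_iff_continuousAt.2 fun v₀ => ?_)
  obtain ⟨w₀, hw₀⟩ := spanGrassmannian_surjective b
    (orthogonalGrassmannian hab (spanGrassmannian a v₀))
  have hw₀_mem (i : Fin b) : w₀.1 i ∈ (span ℝ (range v₀.1))ᗮ := by
    change w₀.1 i ∈ (orthogonalGrassmannian hab (spanGrassmannian a v₀)).1
    rw [← hw₀]
    exact subset_span (mem_range_self i)
  let F (v : {v : Fin a → E // LinearIndependent ℝ v}) : Fin b → E :=
    fun i => orthogonalComponent v.1 (w₀.1 i)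
  have hF : Continuous F := continuous_pi fun i =>
    (continuousOn_orthogonalComponent (w₀.1 i)).domRestrict
  let W : Set {v : Fin a → E // LinearIndependent ℝ v} := {v | LinearIndependent ℝ (F v)}
  have hF₀ : F v₀ = w₀.1 := funext fun i => orthogonalComponent_of_mem_orthogonal (hw₀_mem i)
  have hW : W ∈ nhds v₀ :=
    (isOpen_setOfPred_linearIndependent.preimage hF).mem_nhds
      (show LinearIndependent ℝ (F v₀) from hF₀ ▸ w₀.2)
  refine ContinuousOn.continuousAt (continuousOn_iff_continuous_domRestrict.2 ?_) hW
  have hrestrict : W.domRestrict (orthogonalGrassmannian hab ∘ spanGrassmannian a) =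
      spanGrassmannian b ∘ fun v : W => ⟨F v, v.2⟩ :=
    funext fun v => Subtype.ext (span_range_orthogonalComponent hab v.1.2 v.2).symm
  rw [hrestrict]
  exact (continuous_spanGrassmannian b).comp ((hF.comp continuous_subtype_val).subtype_mk _)

noncomputable def orthogonalGrassmannianHomeomorph (hab : a + b = finrank ℝ E) :
    Gr[E, a] ≃ₜ Gr[E, b] where
  toFun := orthogonalGrassmannian hab
  invFun := orthogonalGrassmannian (by omega)
  left_inv := orthogonalGrassmannian_orthogonalGrassmannian _ _
  right_inv := orthogonalGrassmannian_orthogonalGrassmannian _ _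
  continuous_toFun := continuous_orthogonalGrassmannian _
  continuous_invFun := continuous_orthogonalGrassmannian _

lemma orthogonal_map_eq_map_adjoint {f g : E →ₗ[ℝ] E} (hgf : g ∘ₗ f = LinearMap.id)
    (hfg : f ∘ₗ g = LinearMap.id) (M : Submodule ℝ E) :
    (M.map f)ᗮ = Mᗮ.map (LinearMap.adjoint g) := by
  ext x
  constructor
  · intro hx
    refine ⟨LinearMap.adjoint f x, fun m hm => ?_, ?_⟩
    · rw [LinearMap.adjoint_inner_right]
      exact hx _ (mem_map_of_mem hm)
    · rw [← LinearMap.comp_apply, ← LinearMap.adjoint_comp, hfg, LinearMap.adjoint_id,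
        LinearMap.id_apply]
  · rintro ⟨y, hy, rfl⟩ _ ⟨m, hm, rfl⟩
    rw [LinearMap.adjoint_inner_right, ← LinearMap.comp_apply, hgf]
    exact hy m hm

lemma orthogonal_map_pow (S : E ≃ₗ[ℝ] E) (M : Submodule ℝ E) (k : ℕ) :
    (M.map ((S : E →ₗ[ℝ] E) ^ k))ᗮ = Mᗮ.map (LinearMap.adjoint (S.symm : E →ₗ[ℝ] E) ^ k) := by
  rw [← LinearMap.star_eq_adjoint, ← star_pow, LinearMap.star_eq_adjoint]
  refine orthogonal_map_eq_map_adjoint (pow_mul_pow_eq_one k ?_) (pow_mul_pow_eq_one k ?_) M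
  · exact LinearMap.ext S.symm_apply_apply
  · exact LinearMap.ext S.apply_symm_apply

lemma scSubspace_iff_orthogonal (hab : a + b = finrank ℝ E)
    (S : E ≃ₗ[ℝ] E) (M : Submodule ℝ E) :
    SCSubspace a (S : E →ₗ[ℝ] E) M ↔
      SCSubspace b (LinearMap.adjoint (S.symm : E →ₗ[ℝ] E)) Mᗮ := by
  have hrank (K : Submodule ℝ E) : finrank ℝ K = a ↔ finrank ℝ Kᗮ = b :=
    ⟨finrank_orthogonal_eq hab,
      fun h => K.orthogonal_orthogonal ▸ finrank_orthogonal_eq (by omega) h⟩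
  have hiter (k : ℕ) : finrank ℝ (M.map ((S : E →ₗ[ℝ] E) ^ k)) = a ↔
      finrank ℝ (Mᗮ.map (LinearMap.adjoint (S.symm : E →ₗ[ℝ] E) ^ k)) = b := by
    rw [hrank, orthogonal_map_pow]
  let e := orthogonalGrassmannianHomeomorph hab
  have horbit : {P : Gr[E, b] | ∃ k : ℕ, P.1 = Mᗮ.map (LinearMap.adjoint (S.symm : E →ₗ[ℝ] E) ^ k)}
      = e '' {P : Gr[E, a] | ∃ k : ℕ, P.1 = M.map ((S : E →ₗ[ℝ] E) ^ k)} := by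
    rw [e.image_eq_preimage_symm]
    ext P
    change (∃ k, P.1 = _) ↔ ∃ k, P.1ᗮ = _
    refine exists_congr fun k => ?_
    rw [← orthogonal_map_pow]
    exact ⟨fun h => by rw [h, orthogonal_orthogonal], fun h => by
      rw [← orthogonal_orthogonal P.1]; exact congrArg _ h⟩
  rw [SCSubspace, SCSubspace, horbit, e.isDenseEmbedding.dense_image, hrank, forall_congr' hiter]

end FiniteDimensional

theorem stmt12 (N n : ℕ) (hn : n < N)
    (T : EuclideanSpace ℝ (Fin N) ≃ₗ[ℝ] EuclideanSpace ℝ (Fin N)) :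
    (StronglyNSupercyclic n
        (T : EuclideanSpace ℝ (Fin N) →ₗ[ℝ] EuclideanSpace ℝ (Fin N)) ↔
      StronglyNSupercyclic (N - n)
        (LinearMap.adjoint
          (T.symm : EuclideanSpace ℝ (Fin N) →ₗ[ℝ] EuclideanSpace ℝ (Fin N)))) ∧
    (∀ M : Submodule ℝ (EuclideanSpace ℝ (Fin N)),
      SCSubspace n (T : EuclideanSpace ℝ (Fin N) →ₗ[ℝ] EuclideanSpace ℝ (Fin N)) M ↔
        SCSubspace (N - n)
          (LinearMap.adjoint
            (T.symm : EuclideanSpace ℝ (Fin N) →ₗ[ℝ] EuclideanSpace ℝ (Fin N))) Mᗮ) := by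
  have hdim : n + (N - n) = finrank ℝ (EuclideanSpace ℝ (Fin N)) := by
    rw [finrank_euclideanSpace_fin]
    omega
  have key := scSubspace_iff_orthogonal hdim T
  refine ⟨⟨fun ⟨M, hM⟩ => ⟨Mᗮ, (key M).1 hM⟩, fun ⟨M, hM⟩ => ⟨Mᗮ, (key Mᗮ).2 ?_⟩⟩, key⟩
  rwa [orthogonal_orthogonal]
end
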